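/- arXiv:2404.00157 — 3 statements merged into one kernel-verified Lean document; each statement's English description precedes it below -/
import Mathlib

section
/- Let f : ℝ → [0,∞) be measurable, let φ₁,…,φ_{m₁} be an orthonormal family of L²(ℝ, dx) with ∫ φ_j(x)² f(x) dx < ∞ for each j, and let ψ₁,…,ψ_{m₂} be an orthonormal family of L²(ℝ, dy). Suppose the Gram matrix Ψ = (∫ φ_j φ_{j'} f dx)_{j,j'} is invertible. Then for every Θ ∈ M_{m₁,m₂}(ℝ), the function τ(x,y) = Σ_{j,ℓ} Θ_{jℓ} φ_j(x) ψ_ℓ(y) satisfies ∫∫ τ(x,y)² dx dy ≤ ‖Ψ⁻¹‖_op ∫∫ τ(x,y)² f(x) dx dy, where ‖·‖_op denotes the spectral norm. -/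
open MeasureTheory Real Matrix

/-!
Write `τ(·, y) = ∑ⱼ cⱼ(y) φⱼ` with `c(y) = Θ ψ(y)`. Orthonormality of the `φⱼ` gives
`∫ τ(x, y)² dx = ‖c(y)‖²`, and the definition of `Ψ` gives `∫ τ(x, y)² f(x) dx = c(y)ᵀ Ψ c(y)`.
So the inequality already holds for every fixed `y`, where it is the matrix inequality
`‖v‖² ≤ ‖Ψ⁻¹‖ vᵀ Ψ v` for the positive semidefinite invertible Gram matrix `Ψ`: Cauchy–Schwarz for
the form `(u, v) ↦ uᵀ Ψ v` at `u = Ψ⁻¹ v` gives `‖v‖⁴ ≤ (vᵀ Ψ⁻¹ v) (vᵀ Ψ v) ≤ ‖Ψ⁻¹‖ ‖v‖² vᵀ Ψ v`.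
Integrating over `y` gives the claim.
-/

namespace Matrix

variable {n : Type*} [Fintype n]

theorem PosSemidef.dotProduct_mulVec_sq_le {M : Matrix n n ℝ} (hM : M.PosSemidef)
    (x y : n → ℝ) :
    (x ⬝ᵥ M *ᵥ y) ^ 2 ≤ (x ⬝ᵥ M *ᵥ x) * (y ⬝ᵥ M *ᵥ y) := by
  -- Cauchy–Schwarz in `n → ℝ` with the semi-inner product `⟪x, y⟫ = (M *ᵥ y) ⬝ᵥ star x`.
  let _ := M.toSeminormedAddCommGroup hM
  let _ := M.toInnerProductSpace hM
  have := real_inner_mul_inner_self_le x y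
  change (M *ᵥ y) ⬝ᵥ star x * ((M *ᵥ y) ⬝ᵥ star x)
    ≤ (M *ᵥ x) ⬝ᵥ star x * ((M *ᵥ y) ⬝ᵥ star y) at this
  simp only [star_trivial] at this
  rwa [dotProduct_comm (M *ᵥ y) x, dotProduct_comm (M *ᵥ x) x, dotProduct_comm (M *ᵥ y) y,
    ← sq] at this

variable [DecidableEq n]

open scoped RealInnerProductSpace in
theorem dotProduct_mulVec_le_opNorm_mul (A : Matrix n n ℝ) (v : n → ℝ) :
    v ⬝ᵥ A *ᵥ v ≤ ‖toEuclideanCLM (𝕜 := ℝ) A‖ * (v ⬝ᵥ v) := by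
  set x : EuclideanSpace ℝ n := WithLp.toLp 2 v
  have hx : ‖x‖ ^ 2 = v ⬝ᵥ v := by
    rw [← real_inner_self_eq_norm_sq, EuclideanSpace.inner_toLp_toLp]; rfl
  calc v ⬝ᵥ A *ᵥ v = ⟪x, toEuclideanCLM (𝕜 := ℝ) A x⟫ :=
        (inner_toEuclideanCLM A x x).symm
    _ ≤ ‖x‖ * ‖toEuclideanCLM (𝕜 := ℝ) A x‖ := real_inner_le_norm _ _
    _ ≤ ‖x‖ * (‖toEuclideanCLM (𝕜 := ℝ) A‖ * ‖x‖) := by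
        gcongr; exact (toEuclideanCLM (𝕜 := ℝ) A).le_opNorm x
    _ = ‖toEuclideanCLM (𝕜 := ℝ) A‖ * (v ⬝ᵥ v) := by rw [← hx]; ring

theorem PosSemidef.dotProduct_self_le_opNorm_inv_mul {M : Matrix n n ℝ} (hM : M.PosSemidef)
    (hU : IsUnit M) (v : n → ℝ) :
    v ⬝ᵥ v ≤ ‖toEuclideanCLM (𝕜 := ℝ) M⁻¹‖ * (v ⬝ᵥ M *ᵥ v) := by
  set u := M⁻¹ *ᵥ v
  have hMu : M *ᵥ u = v := by
    rw [mulVec_mulVec, mul_nonsing_inv M ((isUnit_iff_isUnit_det M).mp hU), one_mulVec]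
  have huv : u ⬝ᵥ M *ᵥ v = v ⬝ᵥ v := by
    rw [dotProduct_mulVec, ← mulVec_transpose, ← conjTranspose_eq_transpose_of_trivial,
      hM.isHermitian.eq, hMu, dotProduct_comm]
  have hcs := hM.dotProduct_mulVec_sq_le u v
  rw [huv, hMu, dotProduct_comm u v] at hcs
  have hvu : v ⬝ᵥ u ≤ ‖toEuclideanCLM (𝕜 := ℝ) M⁻¹‖ * (v ⬝ᵥ v) :=
    dotProduct_mulVec_le_opNorm_mul M⁻¹ v
  have hvMv : 0 ≤ v ⬝ᵥ M *ᵥ v := by simpa using hM.dotProduct_mulVec_nonneg v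
  rcases (show 0 ≤ v ⬝ᵥ v by simpa using dotProduct_star_self_nonneg v).eq_or_lt with hv | hv
  · rw [← hv]
    exact mul_nonneg (norm_nonneg _) hvMv
  · nlinarith [mul_le_mul_of_nonneg_right hvu hvMv]

end Matrix

section

variable {α ι : Type*} [MeasurableSpace α]

noncomputable def weightedGram (μ : Measure α) (g : ι → α → ℝ) (w : α → ℝ) : Matrix ι ι ℝ :=
  of fun i j => ∫ x, g i x * g j x * w x ∂μ

variable [Fintype ι] {μ : Measure α}

theorem integral_sq_sum_mul_eq_dotProduct_weightedGram {g : ι → α → ℝ} {w : α → ℝ}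
    (hg : ∀ i j, Integrable (fun x => g i x * g j x * w x) μ) (a : ι → ℝ) :
    ∫ x, (∑ i, a i * g i x) ^ 2 * w x ∂μ = a ⬝ᵥ weightedGram μ g w *ᵥ a := by
  have hexpand : ∀ x, (∑ i, a i * g i x) ^ 2 * w x
      = ∑ i, a i * ∑ j, g i x * g j x * w x * a j := by
    intro x
    simp only [sq, Finset.sum_mul, Finset.mul_sum]
    exact Finset.sum_congr rfl fun i _ => Finset.sum_congr rfl fun j _ => by ring
  simp only [hexpand, dotProduct, mulVec, weightedGram, of_apply]
  rw [integral_finsetSum _ fun i _ => (integrable_finsetSum _ fun j _ =>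
    (hg i j).mul_const _).const_mul _]
  refine Finset.sum_congr rfl fun i _ => ?_
  rw [integral_const_mul, integral_finsetSum _ fun j _ => (hg i j).mul_const _]
  simp only [integral_mul_const]

theorem posSemidef_weightedGram {g : ι → α → ℝ} {w : α → ℝ} (hw : ∀ x, 0 ≤ w x)
    (hg : ∀ i j, Integrable (fun x => g i x * g j x * w x) μ) :
    (weightedGram μ g w).PosSemidef := by
  refine posSemidef_iff_dotProduct_mulVec.mpr ⟨?_, fun a => ?_⟩
  · ext i j
    simp only [conjTranspose_apply, star_trivial, weightedGram, of_apply,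
      mul_comm (g j _)]
  · rw [star_trivial, ← integral_sq_sum_mul_eq_dotProduct_weightedGram hg]
    exact integral_nonneg fun x => mul_nonneg (sq_nonneg _) (hw x)

theorem memLp_two_mul_sqrt {g w : α → ℝ} (hg : AEStronglyMeasurable g μ)
    (hw : AEStronglyMeasurable w μ) (hw0 : ∀ x, 0 ≤ w x)
    (h : Integrable (fun x => g x ^ 2 * w x) μ) :
    MemLp (fun x => g x * √(w x)) 2 μ := by
  have hsqrt := continuous_sqrt.comp_aestronglyMeasurable hw
  refine (memLp_two_iff_integrable_sq (hg.mul hsqrt)).mpr ?_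
  simpa only [Pi.mul_apply, mul_pow, sq_sqrt (hw0 _)] using h

theorem integrable_mul_mul_of_integrable_sq_mul {g h w : α → ℝ}
    (hg : AEStronglyMeasurable g μ) (hh : AEStronglyMeasurable h μ)
    (hw : AEStronglyMeasurable w μ) (hw0 : ∀ x, 0 ≤ w x)
    (hgw : Integrable (fun x => g x ^ 2 * w x) μ) (hhw : Integrable (fun x => h x ^ 2 * w x) μ) :
    Integrable (fun x => g x * h x * w x) μ := by
  have := (memLp_two_mul_sqrt hg hw hw0 hgw).integrable_mul (memLp_two_mul_sqrt hh hw hw0 hhw)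
  refine this.congr (ae_of_all _ fun x => ?_)
  simp only [Pi.mul_apply]
  rw [mul_mul_mul_comm, mul_self_sqrt (hw0 x)]

theorem memLp_mulVec {p : ENNReal} {ι' : Type*} {v : α → ι → ℝ}
    (hv : ∀ j, MemLp (fun x => v x j) p μ) (A : Matrix ι' ι ℝ) (i : ι') :
    MemLp (fun x => (A *ᵥ v x) i) p μ :=
  memLp_finsetSum _ fun j _ => (hv j).const_mul (A i j)

theorem integrable_dotProduct_mulVec {v : α → ι → ℝ} (hv : ∀ i, MemLp (fun x => v x i) 2 μ)
    (A : Matrix ι ι ℝ) :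
    Integrable (fun x => v x ⬝ᵥ A *ᵥ v x) μ := by
  simp only [dotProduct]
  exact integrable_finsetSum _ fun i _ => (hv i).integrable_mul (memLp_mulVec hv A i)

end

theorem L2_norm_le_opNorm_inv_mul_f_weighted_norm_general
    (m₁ m₂ : ℕ)
    (f : ℝ → ℝ) (hfmeas : Measurable f) (hf0 : ∀ x, 0 ≤ f x)
    (φ : Fin m₁ → ℝ → ℝ)
    (hφL2 : ∀ j, MemLp (φ j) 2 (volume : Measure ℝ))
    (hφorth : ∀ j j', ∫ x, φ j x * φ j' x = if j = j' then (1:ℝ) else 0)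
    (hφint : ∀ j, Integrable (fun x => φ j x ^ 2 * f x))
    (ψ : Fin m₂ → ℝ → ℝ)
    (hψL2 : ∀ ℓ, MemLp (ψ ℓ) 2 (volume : Measure ℝ))
    (Ψ : Matrix (Fin m₁) (Fin m₁) ℝ)
    (hΨ : Ψ = Matrix.of fun j j' => ∫ x, φ j x * φ j' x * f x)
    (hinv : IsUnit Ψ)
    (Θ : Matrix (Fin m₁) (Fin m₂) ℝ) :
    ∫ y, ∫ x, (∑ j, ∑ ℓ, Θ j ℓ * φ j x * ψ ℓ y) ^ 2 ≤
      ‖Matrix.toEuclideanCLM (𝕜 := ℝ) Ψ⁻¹‖ *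
        ∫ y, ∫ x, (∑ j, ∑ ℓ, Θ j ℓ * φ j x * ψ ℓ y) ^ 2 * f x := by
  obtain rfl : Ψ = weightedGram volume φ f := hΨ
  set c : ℝ → Fin m₁ → ℝ := fun y => Θ *ᵥ fun ℓ => ψ ℓ y
  have hτ : ∀ y x, ∑ j, ∑ ℓ, Θ j ℓ * φ j x * ψ ℓ y = ∑ j, c y j * φ j x := fun y x =>
    Finset.sum_congr rfl fun j _ => by
      simp only [c, mulVec, dotProduct, Finset.sum_mul]
      exact Finset.sum_congr rfl fun ℓ _ => by ring
  have hφφ : ∀ j j', Integrable (fun x => φ j x * φ j' x * (1 : ℝ → ℝ) x) := fun j j' => by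
    simp only [Pi.one_apply, mul_one]
    exact (hφL2 j).integrable_mul (hφL2 j')
  have hφφf : ∀ j j', Integrable (fun x => φ j x * φ j' x * f x) := fun j j' =>
    integrable_mul_mul_of_integrable_sq_mul (hφL2 j).1 (hφL2 j').1
      hfmeas.aestronglyMeasurable hf0 (hφint j) (hφint j')
  have hgram : weightedGram volume φ 1 = 1 := by
    ext j j'
    simp [weightedGram, hφorth, one_apply]
  have hL : ∀ y, ∫ x, (∑ j, ∑ ℓ, Θ j ℓ * φ j x * ψ ℓ y) ^ 2 = c y ⬝ᵥ c y := fun y => by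
    simpa [hτ, hgram] using integral_sq_sum_mul_eq_dotProduct_weightedGram hφφ (c y)
  have hR : ∀ y, ∫ x, (∑ j, ∑ ℓ, Θ j ℓ * φ j x * ψ ℓ y) ^ 2 * f x
      = c y ⬝ᵥ weightedGram volume φ f *ᵥ c y := fun y => by
    simpa only [hτ] using integral_sq_sum_mul_eq_dotProduct_weightedGram hφφf (c y)
  simp only [hL, hR]
  rw [← integral_const_mul]
  refine integral_mono_of_nonneg (ae_of_all _ fun y => ?_) ?_ (ae_of_all _ fun y => ?_)
  · exact Finset.sum_nonneg fun j _ => mul_self_nonneg _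
  · exact (integrable_dotProduct_mulVec (memLp_mulVec hψL2 Θ) _).const_mul _
  · exact (posSemidef_weightedGram hf0 hφφf).dotProduct_self_le_opNorm_inv_mul hinv (c y)

/-- for τ = Σ_{j,ℓ} Θ_{jℓ} φ_j ⊗ ψ_ℓ with φ orthonormal in L²(dx), ψ
orthonormal in L²(dy) and Ψ the invertible f-weighted Gram matrix of the φ_j,
one has ‖τ‖² ≤ ‖Ψ⁻¹‖_op · ‖τ‖_f². -/
theorem L2_norm_le_opNorm_inv_mul_f_weighted_norm
    (m₁ m₂ : ℕ)
    (f : ℝ → ℝ) (hfmeas : Measurable f) (hf0 : ∀ x, 0 ≤ f x)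
    (φ : Fin m₁ → ℝ → ℝ) (hφmeas : ∀ j, Measurable (φ j))
    (hφL2 : ∀ j, MemLp (φ j) 2 (volume : Measure ℝ))
    (hφorth : ∀ j j', ∫ x, φ j x * φ j' x = if j = j' then (1:ℝ) else 0)
    (hφint : ∀ j, Integrable (fun x => φ j x ^ 2 * f x))
    (ψ : Fin m₂ → ℝ → ℝ) (hψmeas : ∀ ℓ, Measurable (ψ ℓ))
    (hψL2 : ∀ ℓ, MemLp (ψ ℓ) 2 (volume : Measure ℝ))
    (hψorth : ∀ ℓ ℓ', ∫ y, ψ ℓ y * ψ ℓ' y = if ℓ = ℓ' then (1:ℝ) else 0)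
    (Ψ : Matrix (Fin m₁) (Fin m₁) ℝ)
    (hΨ : Ψ = Matrix.of fun j j' => ∫ x, φ j x * φ j' x * f x)
    (hinv : IsUnit Ψ)
    (Θ : Matrix (Fin m₁) (Fin m₂) ℝ) :
    ∫ y, ∫ x, (∑ j, ∑ ℓ, Θ j ℓ * φ j x * ψ ℓ y) ^ 2 ≤
      ‖Matrix.toEuclideanCLM (𝕜 := ℝ) Ψ⁻¹‖ *
        ∫ y, ∫ x, (∑ j, ∑ ℓ, Θ j ℓ * φ j x * ψ ℓ y) ^ 2 * f x :=
  L2_norm_le_opNorm_inv_mul_f_weighted_norm_general m₁ m₂ f hfmeas hf0 φ hφL2 hφorth hφint ψ hψL2 Ψ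
    hΨ hinv Θ
end

section
/- Let f : ℝ → [0,∞) be measurable, let φ₁,…,φ_{m₁} be measurable with sup_{x} Σ_{j=1}^{m₁} φ_j(x)² ≤ L_φ and ∫ φ_j² f < ∞, and let ψ₁,…,ψ_{m₂} be an orthonormal family of L²(ℝ, dy) with sup_{y} Σ_{ℓ=1}^{m₂} ψ_ℓ(y)² ≤ L_ψ. Suppose the Gram matrix Ψ = (∫ φ_j φ_{j'} f dx)_{j,j'} is symmetric positive definite. Then for every Θ ∈ M_{m₁,m₂}(ℝ), the function τ(x,y) = Σ_{j,ℓ} Θ_{jℓ} φ_j(x) ψ_ℓ(y) satisfies sup_{x,y ∈ ℝ} τ(x,y)² ≤ L_φ L_ψ ‖Ψ⁻¹‖_op ∫∫ τ(x,y)² f(x) dx dy, where ‖·‖_op denotes the spectral norm. -/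
open MeasureTheory Real Matrix

/-!
Write `τ(x, y) = Σ_j (Θ ψ(y))_j φ_j(x)`. Pointwise, Cauchy–Schwarz on the index set of `Θ` gives
`τ(x, y)² ≤ L_φ L_ψ ‖Θ‖_F²`. Integrating first in `x` turns `τ²f` into the quadratic form of
the Gram matrix `Ψ` at `Θ ψ(y)`, and orthonormality of the `ψ_ℓ` then gives
`‖τ‖_f² = tr(Θᵀ Ψ Θ)`. Finally `‖Θ‖_F² ≤ ‖Ψ⁻¹‖ tr(Θᵀ Ψ Θ)`, column by column, because
`|Bu|² ≤ ‖B‖ ⟨u, Bu⟩` for the positive operator `B = Ψ⁻¹` and `u = Ψ v`.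
-/

open scoped InnerProduct in
theorem ContinuousLinearMap.norm_adjoint_comp_self_apply_sq_le {𝕜 E F : Type*} [RCLike 𝕜]
    [NormedAddCommGroup E] [InnerProductSpace 𝕜 E] [CompleteSpace E]
    [NormedAddCommGroup F] [InnerProductSpace 𝕜 F] [CompleteSpace F] (A : E →L[𝕜] F) (x : E) :
    ‖(A† ∘L A) x‖ ^ 2 ≤ ‖A† ∘L A‖ * RCLike.re (inner 𝕜 ((A† ∘L A) x) x) := by
  rw [norm_adjoint_comp_self, ← apply_norm_sq_eq_inner_adjoint_left, ← sq, ← mul_pow]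
  gcongr
  calc ‖(A† ∘L A) x‖ ≤ ‖A†‖ * ‖A x‖ := A†.le_opNorm (A x)
    _ = ‖A‖ * ‖A x‖ := by rw [LinearIsometryEquiv.norm_map]

open scoped InnerProduct MatrixOrder in
theorem Matrix.PosSemidef.mulVec_dotProduct_mulVec_le {n : Type*} [Fintype n] [DecidableEq n]
    {B : Matrix n n ℝ} (hB : B.PosSemidef) (u : n → ℝ) :
    B *ᵥ u ⬝ᵥ B *ᵥ u ≤ ‖toEuclideanCLM (𝕜 := ℝ) B‖ * (u ⬝ᵥ B *ᵥ u) := by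
  obtain ⟨S, rfl⟩ := CStarAlgebra.nonneg_iff_eq_star_mul_self.mp hB.nonneg
  have hS : toEuclideanCLM (𝕜 := ℝ) (star S * S) =
      (toEuclideanCLM (𝕜 := ℝ) S)† ∘L toEuclideanCLM (𝕜 := ℝ) S := by
    rw [map_mul, map_star, ContinuousLinearMap.star_eq_adjoint, ContinuousLinearMap.mul_def]
  have := (toEuclideanCLM (𝕜 := ℝ) S).norm_adjoint_comp_self_apply_sq_le (WithLp.toLp 2 u)
  rw [← hS, toEuclideanCLM_toLp, EuclideanSpace.real_norm_sq_eq, RCLike.re_to_real,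
    real_inner_comm, EuclideanSpace.inner_toLp_toLp] at this
  rw [dotProduct_comm u]
  simpa [dotProduct, sq] using this

theorem Matrix.PosDef.dotProduct_self_le {n : Type*} [Fintype n] [DecidableEq n]
    {Ψ : Matrix n n ℝ} (hΨ : Ψ.PosDef) (v : n → ℝ) :
    v ⬝ᵥ v ≤ ‖toEuclideanCLM (𝕜 := ℝ) Ψ⁻¹‖ * (v ⬝ᵥ Ψ *ᵥ v) := by
  have hv : Ψ⁻¹ *ᵥ Ψ *ᵥ v = v := by
    rw [mulVec_mulVec, nonsing_inv_mul _ (isUnit_iff_ne_zero.2 hΨ.det_pos.ne'), one_mulVec]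
  have := hΨ.inv.posSemidef.mulVec_dotProduct_mulVec_le (Ψ *ᵥ v)
  rwa [hv, dotProduct_comm (Ψ *ᵥ v)] at this

theorem Matrix.PosDef.sum_sq_le_norm_inv_mul_trace {m n : Type*} [Fintype m] [Fintype n]
    [DecidableEq m] {Ψ : Matrix m m ℝ} (hΨ : Ψ.PosDef) (Θ : Matrix m n ℝ) :
    ∑ j, ∑ ℓ, Θ j ℓ ^ 2 ≤ ‖toEuclideanCLM (𝕜 := ℝ) Ψ⁻¹‖ * (Θᵀ * Ψ * Θ).trace := by
  have hcol : ∀ ℓ, (Θᵀ * Ψ * Θ) ℓ ℓ = Θᵀ ℓ ⬝ᵥ Ψ *ᵥ Θᵀ ℓ := by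
    intro ℓ
    rw [Matrix.mul_assoc]
    rfl
  rw [Finset.sum_comm, Matrix.trace, Finset.mul_sum]
  refine Finset.sum_le_sum fun ℓ _ => ?_
  simpa only [diag_apply, hcol, dotProduct, sq, transpose_apply] using hΨ.dotProduct_self_le (Θᵀ ℓ)

theorem sq_sum_sum_mul_le {ι κ : Type*} [Fintype ι] [Fintype κ] (Θ : Matrix ι κ ℝ)
    (a : ι → ℝ) (b : κ → ℝ) :
    (∑ j, ∑ ℓ, Θ j ℓ * a j * b ℓ) ^ 2 ≤
      (∑ j, a j ^ 2) * (∑ ℓ, b ℓ ^ 2) * ∑ j, ∑ ℓ, Θ j ℓ ^ 2 := by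
  have := Finset.sum_mul_sq_le_sq_mul_sq Finset.univ (fun p : ι × κ => Θ p.1 p.2)
    (fun p => a p.1 * b p.2)
  simp only [← Finset.univ_product_univ, Finset.sum_product, mul_pow, ← Finset.sum_mul_sum,
    ← mul_assoc] at this
  linarith

section Integrals

variable {α : Type*} [MeasurableSpace α] {μ : Measure α}

theorem integrable_mul_mul_of_sq_mul {g h w : α → ℝ} (hg : Measurable g) (hh : Measurable h)
    (hw : Measurable w) (hw0 : ∀ x, 0 ≤ w x) (hgw : Integrable (fun x => g x ^ 2 * w x) μ)
    (hhw : Integrable (fun x => h x ^ 2 * w x) μ) :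
    Integrable (fun x => g x * h x * w x) μ := by
  refine (hgw.add hhw).mono' ((hg.mul hh).mul hw).aestronglyMeasurable (.of_forall fun x => ?_)
  have hgh : |g x * h x| ≤ g x ^ 2 + h x ^ 2 :=
    abs_le.2 ⟨by nlinarith [sq_nonneg (g x + h x)], by nlinarith [sq_nonneg (g x - h x)]⟩
  rw [Real.norm_eq_abs, abs_mul, abs_of_nonneg (hw0 x), Pi.add_apply, ← add_mul]
  exact mul_le_mul_of_nonneg_right hgh (hw0 x)

theorem integral_sum_sum_const_mul {ι κ : Type*} [Fintype ι] [Fintype κ] (c : ι → κ → ℝ)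
    (u : ι → κ → α → ℝ) (hu : ∀ i k, Integrable (u i k) μ) :
    ∫ x, ∑ i, ∑ k, c i k * u i k x ∂μ = ∑ i, ∑ k, c i k * ∫ x, u i k x ∂μ := by
  rw [integral_finsetSum _ fun i _ => integrable_finsetSum _ fun k _ => (hu i k).const_mul _]
  refine Finset.sum_congr rfl fun i _ => ?_
  rw [integral_finsetSum _ fun k _ => (hu i k).const_mul _]
  simp only [integral_const_mul]

theorem integral_sq_sum_mul_eq_dotProduct_mulVec {ι : Type*} [Fintype ι] (φ : ι → α → ℝ)
    (f : α → ℝ) (hφ : ∀ i j, Integrable (fun x => φ i x * φ j x * f x) μ) (c : ι → ℝ) :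
    ∫ x, (∑ i, c i * φ i x) ^ 2 * f x ∂μ =
      c ⬝ᵥ (of fun i j => ∫ x, φ i x * φ j x * f x ∂μ) *ᵥ c := by
  have hexp : ∀ x, (∑ i, c i * φ i x) ^ 2 * f x =
      ∑ i, ∑ j, c i * c j * (φ i x * φ j x * f x) := by
    intro x
    rw [sq, Finset.sum_mul_sum, Finset.sum_mul]
    refine Finset.sum_congr rfl fun i _ => ?_
    rw [Finset.sum_mul]
    exact Finset.sum_congr rfl fun j _ => by ring
  simp only [hexp, integral_sum_sum_const_mul _ _ hφ, dotProduct, mulVec, of_apply, Finset.mul_sum]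
  exact Finset.sum_congr rfl fun i _ => Finset.sum_congr rfl fun j _ => by ring

theorem integral_dotProduct_mulVec_eq_trace {κ : Type*} [Fintype κ] [DecidableEq κ]
    (ψ : κ → α → ℝ) (hψ : ∀ k l, Integrable (fun y => ψ k y * ψ l y) μ)
    (hψorth : ∀ k l, ∫ y, ψ k y * ψ l y ∂μ = if k = l then (1:ℝ) else 0) (K : Matrix κ κ ℝ) :
    ∫ y, (fun k => ψ k y) ⬝ᵥ K *ᵥ (fun k => ψ k y) ∂μ = K.trace := by
  have hexp : ∀ y, (fun k => ψ k y) ⬝ᵥ K *ᵥ (fun k => ψ k y) =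
      ∑ k, ∑ l, K k l * (ψ k y * ψ l y) := by
    intro y
    simp only [dotProduct, mulVec, Finset.mul_sum]
    exact Finset.sum_congr rfl fun k _ => Finset.sum_congr rfl fun l _ => by ring
  simp_rw [hexp]
  rw [integral_sum_sum_const_mul K (fun k l y => ψ k y * ψ l y) hψ]
  simp [hψorth, Matrix.trace]

end Integrals

theorem sup_norm_sq_le_f_weighted_norm_sq_general
    (m₁ m₂ : ℕ) (Lφ Lψ : ℝ)
    (f : ℝ → ℝ) (hfmeas : Measurable f) (hf0 : ∀ x, 0 ≤ f x)
    (φ : Fin m₁ → ℝ → ℝ) (hφmeas : ∀ j, Measurable (φ j))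
    (hφL : ∀ x, ∑ j, φ j x ^ 2 ≤ Lφ)
    (hφint : ∀ j, Integrable (fun x => φ j x ^ 2 * f x))
    (ψ : Fin m₂ → ℝ → ℝ)
    (hψL2 : ∀ ℓ, MemLp (ψ ℓ) 2 (volume : Measure ℝ))
    (hψorth : ∀ ℓ ℓ', ∫ y, ψ ℓ y * ψ ℓ' y = if ℓ = ℓ' then (1:ℝ) else 0)
    (hψL : ∀ y, ∑ ℓ, ψ ℓ y ^ 2 ≤ Lψ)
    (Ψ : Matrix (Fin m₁) (Fin m₁) ℝ)
    (hΨ : Ψ = Matrix.of fun j j' => ∫ x, φ j x * φ j' x * f x)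
    (hpos : Ψ.PosDef)
    (Θ : Matrix (Fin m₁) (Fin m₂) ℝ) :
    ∀ x y : ℝ, (∑ j, ∑ ℓ, Θ j ℓ * φ j x * ψ ℓ y) ^ 2 ≤
      Lφ * Lψ * ‖Matrix.toEuclideanCLM (𝕜 := ℝ) Ψ⁻¹‖ *
        ∫ y', ∫ x', (∑ j, ∑ ℓ, Θ j ℓ * φ j x' * ψ ℓ y') ^ 2 * f x' := by
  intro x y
  have hτ : ∀ x y, ∑ j, ∑ ℓ, Θ j ℓ * φ j x * ψ ℓ y = ∑ j, (Θ *ᵥ fun ℓ => ψ ℓ y) j * φ j x := by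
    intro x y
    simp only [mulVec, dotProduct, Finset.sum_mul]
    exact Finset.sum_congr rfl fun j _ => Finset.sum_congr rfl fun ℓ _ => by ring
  have hnorm : ∫ y', ∫ x', (∑ j, ∑ ℓ, Θ j ℓ * φ j x' * ψ ℓ y') ^ 2 * f x' =
      (Θᵀ * Ψ * Θ).trace := by
    have hφφ j j' := integrable_mul_mul_of_sq_mul (hφmeas j) (hφmeas j') hfmeas hf0 (hφint j)
      (hφint j')
    simp_rw [hτ, integral_sq_sum_mul_eq_dotProduct_mulVec φ f hφφ, ← hΨ, dotProduct_mulVec,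
      ← vecMul_transpose, vecMul_vecMul, ← dotProduct_mulVec]
    exact integral_dotProduct_mulVec_eq_trace ψ (fun ℓ ℓ' => (hψL2 ℓ).integrable_mul (hψL2 ℓ'))
      hψorth _
  have hLφ : 0 ≤ Lφ := (Finset.sum_nonneg fun j _ => sq_nonneg (φ j 0)).trans (hφL 0)
  have hLψ : 0 ≤ Lψ := (Finset.sum_nonneg fun ℓ _ => sq_nonneg (ψ ℓ 0)).trans (hψL 0)
  rw [hnorm, mul_assoc]
  calc (∑ j, ∑ ℓ, Θ j ℓ * φ j x * ψ ℓ y) ^ 2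
      ≤ (∑ j, φ j x ^ 2) * (∑ ℓ, ψ ℓ y ^ 2) * ∑ j, ∑ ℓ, Θ j ℓ ^ 2 := sq_sum_sum_mul_le Θ _ _
    _ ≤ Lφ * Lψ * (‖toEuclideanCLM (𝕜 := ℝ) Ψ⁻¹‖ * (Θᵀ * Ψ * Θ).trace) := by
      gcongr
      · exact hφL x
      · exact hψL y
      · exact hpos.sum_sq_le_norm_inv_mul_trace Θ

/-- sup-norm control sup_{x,y} τ(x,y)² ≤ L_φ L_ψ ‖Ψ⁻¹‖_op ‖τ‖_f² for
τ = Σ_{j,ℓ} Θ_{jℓ} φ_j ⊗ ψ_ℓ, with Ψ the symmetric positive definite f-weighted Gram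
matrix of the φ_j. -/
theorem sup_norm_sq_le_f_weighted_norm_sq
    (m₁ m₂ : ℕ) (Lφ Lψ : ℝ)
    (f : ℝ → ℝ) (hfmeas : Measurable f) (hf0 : ∀ x, 0 ≤ f x)
    (φ : Fin m₁ → ℝ → ℝ) (hφmeas : ∀ j, Measurable (φ j))
    (hφL : ∀ x, ∑ j, φ j x ^ 2 ≤ Lφ)
    (hφint : ∀ j, Integrable (fun x => φ j x ^ 2 * f x))
    (ψ : Fin m₂ → ℝ → ℝ) (hψmeas : ∀ ℓ, Measurable (ψ ℓ))
    (hψL2 : ∀ ℓ, MemLp (ψ ℓ) 2 (volume : Measure ℝ))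
    (hψorth : ∀ ℓ ℓ', ∫ y, ψ ℓ y * ψ ℓ' y = if ℓ = ℓ' then (1:ℝ) else 0)
    (hψL : ∀ y, ∑ ℓ, ψ ℓ y ^ 2 ≤ Lψ)
    (Ψ : Matrix (Fin m₁) (Fin m₁) ℝ)
    (hΨ : Ψ = Matrix.of fun j j' => ∫ x, φ j x * φ j' x * f x)
    (hpos : Ψ.PosDef)
    (Θ : Matrix (Fin m₁) (Fin m₂) ℝ) :
    ∀ x y : ℝ, (∑ j, ∑ ℓ, Θ j ℓ * φ j x * ψ ℓ y) ^ 2 ≤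
      Lφ * Lψ * ‖Matrix.toEuclideanCLM (𝕜 := ℝ) Ψ⁻¹‖ *
        ∫ y', ∫ x', (∑ j, ∑ ℓ, Θ j ℓ * φ j x' * ψ ℓ y') ^ 2 * f x' :=
  sup_norm_sq_le_f_weighted_norm_sq_general m₁ m₂ Lφ Lψ f hfmeas hf0 φ hφmeas hφL hφint ψ hψL2
    hψorth hψL Ψ hΨ hpos Θ
end

section
/- Let μ be a probability measure on ℝ, let ρ be a probability measure on ℝ² whose first marginal is μ, and let k : ℝ × ℝ → [0,∞) be measurable with ∫_ℝ k(x,y) dy = 1 for μ-almost every x. Let φ₁,…,φ_{m₁} ∈ L²(μ), and let ψ₁,…,ψ_{m₂} be bounded measurable functions forming an orthonormal family of L²(ℝ, dy) with sup_{y∈ℝ} Σ_{ℓ=1}^{m₂} ψ_ℓ(y)² ≤ L_ψ. Then for every Θ ∈ M_{m₁,m₂}(ℝ), the function τ(x,y) = Σ_{j,ℓ} Θ_{jℓ} φ_j(x) ψ_ℓ(y) satisfies |∫_{ℝ²} τ dρ − ∫_ℝ (∫_ℝ τ(x,y) k(x,y) dy) μ(dx)| ≤ 2 √(m₁ L_ψ)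 · (∫_ℝ ∫_ℝ τ(x,y)² dy μ(dx))^{1/2}. -/
open MeasureTheory Real

/-!
For fixed `x`, `y ↦ τ(x, y) = ∑ ℓ c_ℓ(x) ψ_ℓ(y)` with `c_ℓ = ∑ⱼ Θ_{jℓ} φⱼ`, so Cauchy–Schwarz in `ℓ`
and Parseval give `|τ(x, y)| ≤ √Lψ · G(x)` with `G(x)² = ∑ ℓ c_ℓ(x)² = ∫ τ(x, y)² dy`. Since `ρ` has
first marginal `μ` and `k(x, ·)` is a probability density, both `∫ τ dρ` and `∫∫ τ k dy dμ` are
bounded by `√Lψ ∫ G dμ`, and `∫ G dμ ≤ (∫ G² dμ)^{1/2}` by Jensen. This yields the constant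
`2√Lψ`, which is at most `2√(m₁ Lψ)` unless `m₁ = 0`, where `τ = 0`.
-/

section Integrals

variable {α β : Type*} [MeasurableSpace α] [MeasurableSpace β]

lemma integrable_sqrt_of_nonneg {μ : Measure α} [IsFiniteMeasure μ] {f : α → ℝ}
    (hf : Integrable f μ) (hf0 : 0 ≤ᵐ[μ] f) : Integrable (fun x => √(f x)) μ := by
  have hmeas : AEStronglyMeasurable (fun x => √(f x)) μ :=
    continuous_sqrt.comp_aestronglyMeasurable hf.aestronglyMeasurable
  refine ((memLp_two_iff_integrable_sq hmeas).2 (hf.congr ?_)).integrable one_le_two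
  filter_upwards [hf0] with x hx using (sq_sqrt hx).symm

lemma integral_sqrt_le_sqrt_integral {μ : Measure α} [IsProbabilityMeasure μ] {f : α → ℝ}
    (hf : Integrable f μ) (hf0 : 0 ≤ᵐ[μ] f) : ∫ x, √(f x) ∂μ ≤ √(∫ x, f x ∂μ) :=
  strictConcaveOn_sqrt.concaveOn.le_map_integral continuous_sqrt.continuousOn isClosed_Ici hf0 hf
    (integrable_sqrt_of_nonneg hf hf0)

lemma abs_integral_le_integral_of_map_fst {ρ : Measure (α × β)} {μ : Measure α}
    (hmarg : ρ.map Prod.fst = μ) {f : α × β → ℝ} {g : α → ℝ} (hg : Integrable g μ)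
    (hfg : ∀ q, |f q| ≤ g q.1) : |∫ q, f q ∂ρ| ≤ ∫ x, g x ∂μ := by
  subst hmarg
  have hg' : Integrable (g ∘ Prod.fst) ρ :=
    (integrable_map_measure hg.aestronglyMeasurable measurable_fst.aemeasurable).1 hg
  rw [integral_map measurable_fst.aemeasurable hg.aestronglyMeasurable]
  exact norm_integral_le_of_norm_le (f := f) hg' (.of_forall hfg)

lemma abs_integral_mul_density_le {ν : Measure β} {f k : β → ℝ} {C : ℝ} (hk0 : 0 ≤ᵐ[ν] k)
    (hk1 : ∫ y, k y ∂ν = 1) (hf : ∀ y, |f y| ≤ C) : |∫ y, f y * k y ∂ν| ≤ C := by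
  have hk : Integrable k ν := .of_integral_ne_zero (f := k) (by simp [hk1])
  calc |∫ y, f y * k y ∂ν| ≤ ∫ y, C * k y ∂ν := by
        refine norm_integral_le_of_norm_le (f := fun y => f y * k y) (hk.const_mul C) ?_
        filter_upwards [hk0] with y hy
        rw [Real.norm_eq_abs, abs_mul, abs_of_nonneg hy]
        exact mul_le_mul_of_nonneg_right (hf y) hy
    _ = C := by rw [integral_const_mul, hk1, mul_one]

lemma abs_integral_sub_integral_kernel_le {ρ : Measure (α × β)} {μ : Measure α} {ν : Measure β}
    (hmarg : ρ.map Prod.fst = μ) {k : α → β → ℝ} (hk0 : ∀ x y, 0 ≤ k x y)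
    (hk1 : ∀ᵐ x ∂μ, ∫ y, k x y ∂ν = 1) {f : α → β → ℝ} {g : α → ℝ} (hg : Integrable g μ)
    (hfg : ∀ x y, |f x y| ≤ g x) :
    |(∫ q, f q.1 q.2 ∂ρ) - ∫ x, (∫ y, f x y * k x y ∂ν) ∂μ| ≤ 2 * ∫ x, g x ∂μ := by
  have hρ := abs_integral_le_integral_of_map_fst hmarg hg fun q => hfg q.1 q.2
  have hkernel : |∫ x, (∫ y, f x y * k x y ∂ν) ∂μ| ≤ ∫ x, g x ∂μ := by
    refine norm_integral_le_of_norm_le (f := fun x => ∫ y, f x y * k x y ∂ν) hg ?_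
    filter_upwards [hk1] with x hx
    exact abs_integral_mul_density_le (.of_forall (hk0 x)) hx (hfg x)
  linarith [abs_sub (∫ q, f q.1 q.2 ∂ρ) (∫ x, (∫ y, f x y * k x y ∂ν) ∂μ)]

end Integrals

section Orthonormal

variable {β ι : Type*} [MeasurableSpace β] {ν : Measure β} [DecidableEq ι]
  {ψ : ι → β → ℝ}

lemma integrable_mul_of_orthonormal (hψ : ∀ i, Measurable (ψ i))
    (horth : ∀ i j, ∫ y, ψ i y * ψ j y ∂ν = if i = j then 1 else 0) (i j : ι) :
    Integrable (fun y => ψ i y * ψ j y) ν := by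
  have hL2 : ∀ i, MemLp (ψ i) 2 ν := fun i =>
    (memLp_two_iff_integrable_sq (hψ i).aestronglyMeasurable).2 <|
      .of_integral_ne_zero (by simp [sq, horth])
  exact (hL2 i).integrable_mul (hL2 j)

lemma integral_sq_sum_mul_of_orthonormal [Fintype ι] (hψ : ∀ i, Measurable (ψ i))
    (horth : ∀ i j, ∫ y, ψ i y * ψ j y ∂ν = if i = j then 1 else 0) (c : ι → ℝ) :
    ∫ y, (∑ i, c i * ψ i y) ^ 2 ∂ν = ∑ i, c i ^ 2 := by
  have hint := integrable_mul_of_orthonormal hψ horth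
  have hexpand : ∀ y, (∑ i, c i * ψ i y) ^ 2 = ∑ i, ∑ j, c i * c j * (ψ i y * ψ j y) := by
    intro y
    rw [sq, Finset.sum_mul_sum]
    exact Finset.sum_congr rfl fun i _ => Finset.sum_congr rfl fun j _ => by ring
  simp_rw [hexpand]
  rw [integral_finsetSum _ fun i _ => integrable_finsetSum _ fun j _ => (hint i j).const_mul _]
  refine Finset.sum_congr rfl fun i _ => ?_
  rw [integral_finsetSum _ fun j _ => (hint i j).const_mul _]
  simp [integral_const_mul, horth, sq]

end Orthonormal

lemma abs_sum_mul_le_sqrt_mul_sqrt {ι : Type*} [Fintype ι] (c ψ : ι → ℝ) {L : ℝ}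
    (hL : ∑ i, ψ i ^ 2 ≤ L) : |∑ i, c i * ψ i| ≤ √L * √(∑ i, c i ^ 2) := by
  rw [← sqrt_mul' _ (Finset.sum_nonneg fun i _ => sq_nonneg (c i)), mul_comm L]
  refine abs_le_sqrt ((Finset.sum_mul_sq_le_sq_mul_sq _ c ψ).trans ?_)
  exact mul_le_mul_of_nonneg_left hL (Finset.sum_nonneg fun i _ => sq_nonneg _)

theorem empirical_process_rough_bound_general
    (m₁ m₂ : ℕ) (Lψ : ℝ)
    (μ : Measure ℝ) [IsProbabilityMeasure μ]
    (ρ : Measure (ℝ × ℝ))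
    (hmarg : ρ.map Prod.fst = μ)
    (k : ℝ → ℝ → ℝ)
    (hk0 : ∀ x y, 0 ≤ k x y)
    (hk1 : ∀ᵐ x ∂μ, ∫ y, k x y = 1)
    (φ : Fin m₁ → ℝ → ℝ) (hφ : ∀ j, MemLp (φ j) 2 μ)
    (ψ : Fin m₂ → ℝ → ℝ) (hψmeas : ∀ ℓ, Measurable (ψ ℓ))
    (hψorth : ∀ ℓ ℓ', ∫ y, ψ ℓ y * ψ ℓ' y = if ℓ = ℓ' then (1:ℝ) else 0)
    (hψL : ∀ y, ∑ ℓ, ψ ℓ y ^ 2 ≤ Lψ)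
    (Θ : Matrix (Fin m₁) (Fin m₂) ℝ) :
    |(∫ q, (∑ j, ∑ ℓ, Θ j ℓ * φ j q.1 * ψ ℓ q.2) ∂ρ) -
        ∫ x, (∫ y, (∑ j, ∑ ℓ, Θ j ℓ * φ j x * ψ ℓ y) * k x y) ∂μ| ≤
      2 * Real.sqrt ((m₁ : ℝ) * Lψ) *
        Real.sqrt (∫ x, (∫ y, (∑ j, ∑ ℓ, Θ j ℓ * φ j x * ψ ℓ y) ^ 2) ∂μ) := by
  rcases Nat.eq_zero_or_pos m₁ with rfl | hm
  · simp
  set c : Fin m₂ → ℝ → ℝ := fun ℓ x => ∑ j, Θ j ℓ * φ j x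
  have hτ : ∀ x y, ∑ j, ∑ ℓ, Θ j ℓ * φ j x * ψ ℓ y = ∑ ℓ, c ℓ x * ψ ℓ y := fun x y => by
    rw [Finset.sum_comm]
    exact Finset.sum_congr rfl fun ℓ _ => (Finset.sum_mul _ _ _).symm
  simp only [hτ, integral_sq_sum_mul_of_orthonormal hψmeas hψorth]
  have hS0 : 0 ≤ᵐ[μ] fun x => ∑ ℓ, c ℓ x ^ 2 := .of_forall fun x => by positivity
  have hS : Integrable (fun x => ∑ ℓ, c ℓ x ^ 2) μ := integrable_finsetSum _ fun ℓ _ =>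
    (memLp_finsetSum _ fun j _ => (hφ j).const_mul (Θ j ℓ)).integrable_sq
  calc _ ≤ 2 * ∫ x, √Lψ * √(∑ ℓ, c ℓ x ^ 2) ∂μ :=
        abs_integral_sub_integral_kernel_le hmarg hk0 hk1
          ((integrable_sqrt_of_nonneg hS hS0).const_mul _)
          fun x y => abs_sum_mul_le_sqrt_mul_sqrt _ _ (hψL y)
    _ ≤ 2 * √Lψ * √(∫ x, ∑ ℓ, c ℓ x ^ 2 ∂μ) := by
        rw [integral_const_mul, ← mul_assoc]
        gcongr
        exact integral_sqrt_le_sqrt_integral hS hS0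
    _ ≤ _ := by
        gcongr
        exact le_mul_of_one_le_left (le_trans (by positivity) (hψL 0)) (mod_cast hm)

/-- deterministic core of the rough empirical process bound: for
τ = Σ_{j,ℓ} Θ_{jℓ} φ_j ⊗ ψ_ℓ, with ρ a probability measure on ℝ² of first marginal μ
and k(x,·) probability densities,
|∫τ dρ − ∫∫ τ(x,y)k(x,y) dy dμ(x)| ≤ 2√(m₁ L_ψ) (∫∫ τ(x,y)² dy dμ(x))^{1/2}. -/
theorem empirical_process_rough_bound
    (m₁ m₂ : ℕ) (Lψ : ℝ)
    (μ : Measure ℝ) [IsProbabilityMeasure μ]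
    (ρ : Measure (ℝ × ℝ)) [IsProbabilityMeasure ρ]
    (hmarg : ρ.map Prod.fst = μ)
    (k : ℝ → ℝ → ℝ) (hkmeas : Measurable (Function.uncurry k))
    (hk0 : ∀ x y, 0 ≤ k x y)
    (hk1 : ∀ᵐ x ∂μ, ∫ y, k x y = 1)
    (φ : Fin m₁ → ℝ → ℝ) (hφ : ∀ j, MemLp (φ j) 2 μ)
    (ψ : Fin m₂ → ℝ → ℝ) (hψmeas : ∀ ℓ, Measurable (ψ ℓ))
    (hψorth : ∀ ℓ ℓ', ∫ y, ψ ℓ y * ψ ℓ' y = if ℓ = ℓ' then (1:ℝ) else 0)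
    (hψL : ∀ y, ∑ ℓ, ψ ℓ y ^ 2 ≤ Lψ)
    (Θ : Matrix (Fin m₁) (Fin m₂) ℝ) :
    |(∫ q, (∑ j, ∑ ℓ, Θ j ℓ * φ j q.1 * ψ ℓ q.2) ∂ρ) -
        ∫ x, (∫ y, (∑ j, ∑ ℓ, Θ j ℓ * φ j x * ψ ℓ y) * k x y) ∂μ| ≤
      2 * Real.sqrt ((m₁ : ℝ) * Lψ) *
        Real.sqrt (∫ x, (∫ y, (∑ j, ∑ ℓ, Θ j ℓ * φ j x * ψ ℓ y) ^ 2) ∂μ) :=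
  empirical_process_rough_bound_general m₁ m₂ Lψ μ ρ hmarg k hk0 hk1 φ hφ ψ hψmeas hψorth hψL Θ
end
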